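/- Let α > 1 and σ > 0 be real numbers, set s₁ = 2σ/(α−1), and let s₂ be a real number with 2(s₁ + s₂) ≤ 1. Define a_n = 0 for n ≤ 0, a_1 = 1, and a_n = n^{−1/2} (log n)^{−3/4} for n ≥ 2. Then (a_n) is square-summable, and the quantity S_N = Σ_{n ∈ ℤ, 0 < |n| ≤ 2N} ⟨n⟩^{−2s₂} | Σ_{m ∈ ℤ, |m| ≤ N, |n+m| ≤ N} ⟨n+m⟩^σ ⟨m⟩^σ ⟨ |n+m|^α − |m|^α ⟩^{−s₁} a_{n+m} a_m |² tends to +∞ as N → ∞. -/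

import Mathlib

/-!
Only the terms with `2 ≤ n ≤ m` are kept. There `⟨n+m⟩^σ ⟨m⟩^σ ≥ m^{2σ}`, convexity of `x ↦ x^α`
gives `⟨(n+m)^α - m^α⟩ ≲ n m^{α-1}`, and `a_{n+m} ≳ a_m`; at the endpoint `(α-1) s₁ = 2σ` the
powers of `m` cancel and the summand is `≳ n^{-s₁} a_m² = n^{-s₁} / (m (log m)^{3/2})`.
Summing over `n ≤ m < n⁴` makes the inner sum `≳ n^{-s₁} (log n)^{-1/2}`, so the `n`-th outer
term is `≳ n^{-2(s₁+s₂)} / log n ≥ 1 / (n log n)`, and these partial sums grow like `log log`.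
The Bertrand-type sums are compared with differences of the antiderivatives `-2 (log x)^{-1/2}`
and `log log x`, which also gives the square-summability of `a`.
-/

open Real Filter Finset

noncomputable section

/-- The Japanese bracket `⟨x⟩ = (1 + x²)^{1/2}`. -/
def jb (x : ℝ) : ℝ := (1 + x ^ 2) ^ ((1:ℝ)/2)

/-- The coefficients `a_n = 0` for `n ≤ 0`, `a_1 = 1`, and
`a_n = n^{−1/2} (log n)^{−3/4}` for `n ≥ 2`. -/
def logCoeff (n : ℤ) : ℝ :=
  if n ≤ 0 then 0
  else if n = 1 then 1
  else (n : ℝ) ^ (-(1:ℝ)/2) * Real.log (n : ℝ) ^ (-(3:ℝ)/4)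

lemma jb_eq_sqrt (x : ℝ) : jb x = √(1 + x ^ 2) := by
  rw [jb, Real.sqrt_eq_rpow]

lemma jb_pos (x : ℝ) : 0 < jb x := by
  rw [jb_eq_sqrt]; positivity

lemma abs_le_jb (x : ℝ) : |x| ≤ jb x := by
  rw [jb_eq_sqrt]; exact Real.abs_le_sqrt (by linarith)

lemma jb_le_one_add_abs (x : ℝ) : jb x ≤ 1 + |x| := by
  rw [jb_eq_sqrt, Real.sqrt_le_left (by positivity)]
  nlinarith [sq_abs x, abs_nonneg x]

lemma min_one_two_rpow_mul_le_jb_rpow (p : ℝ) {x : ℝ} (hx : 1 ≤ x) :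
    min 1 (2 ^ p) * x ^ p ≤ jb x ^ p := by
  have hx0 : 0 ≤ x := by linarith
  rcases le_total 0 p with hp | hp
  · calc min 1 (2 ^ p) * x ^ p ≤ 1 * x ^ p := by gcongr; exact min_le_left _ _
      _ ≤ jb x ^ p := by
        rw [one_mul]
        exact Real.rpow_le_rpow hx0 ((le_abs_self x).trans (abs_le_jb x)) hp
  · have hjb : jb x ≤ 2 * x := by
      have := jb_le_one_add_abs x
      rw [abs_of_nonneg hx0] at this
      linarith
    calc min 1 (2 ^ p) * x ^ p ≤ 2 ^ p * x ^ p := by gcongr; exact min_le_right _ _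
      _ = (2 * x) ^ p := (Real.mul_rpow zero_le_two hx0).symm
      _ ≤ jb x ^ p := Real.rpow_le_rpow_of_nonpos (jb_pos x) hjb hp

lemma logCoeff_nonneg (n : ℤ) : 0 ≤ logCoeff n := by
  unfold logCoeff
  split_ifs with h1 h2
  · exact le_rfl
  · exact zero_le_one
  · have hn : (1:ℝ) ≤ n := by exact_mod_cast (by omega : (1:ℤ) ≤ n)
    exact mul_nonneg (Real.rpow_nonneg (by linarith) _) (Real.rpow_nonneg (Real.log_nonneg hn) _)

lemma logCoeff_of_two_le {n : ℤ} (hn : 2 ≤ n) :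
    logCoeff n = (n : ℝ) ^ (-(1:ℝ)/2) * log n ^ (-(3:ℝ)/4) := by
  rw [logCoeff, if_neg (by omega), if_neg (by omega)]

lemma logCoeff_sq {n : ℤ} (hn : 2 ≤ n) :
    logCoeff n ^ 2 = (n : ℝ)⁻¹ * log n ^ (-(3:ℝ)/2) := by
  have hn0 : (0:ℝ) < n := by exact_mod_cast (by omega : (0:ℤ) < n)
  have hlog : 0 < log n := Real.log_pos (by exact_mod_cast (by omega : (1:ℤ) < n))
  rw [logCoeff_of_two_le hn, mul_pow, ← Real.rpow_natCast, ← Real.rpow_natCast,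
    ← Real.rpow_mul hn0.le, ← Real.rpow_mul hlog.le]
  norm_num [Real.rpow_neg_one]

lemma two_rpow_mul_logCoeff_le_logCoeff_add {n m : ℤ} (hn : 0 ≤ n) (hm : 2 ≤ m) (hnm : n ≤ m) :
    2 ^ (-(5:ℝ)/4) * logCoeff m ≤ logCoeff (n + m) := by
  have hm2 : (2:ℝ) ≤ m := by exact_mod_cast hm
  have hnm' : (n + m : ℝ) ≤ 2 * m := by
    have : (n:ℝ) ≤ m := by exact_mod_cast hnm
    linarith
  have hn' : (0:ℝ) ≤ n := by exact_mod_cast hn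
  have hlogm : 0 < log m := Real.log_pos (by linarith)
  have hlog : log (n + m) ≤ 2 * log m := by
    calc log (n + m) ≤ log ((m:ℝ) ^ 2) := Real.log_le_log (by linarith) (by nlinarith)
      _ = 2 * log m := by rw [Real.log_pow]; norm_num
  rw [logCoeff_of_two_le hm, logCoeff_of_two_le (by omega), Int.cast_add]
  calc 2 ^ (-(5:ℝ)/4) * ((m:ℝ) ^ (-(1:ℝ)/2) * log m ^ (-(3:ℝ)/4))
      = (2 * (m:ℝ)) ^ (-(1:ℝ)/2) * (2 * log m) ^ (-(3:ℝ)/4) := by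
        rw [Real.mul_rpow zero_le_two (by linarith), Real.mul_rpow zero_le_two hlogm.le,
          show (-(5:ℝ)/4) = -(1:ℝ)/2 + -(3:ℝ)/4 by norm_num, Real.rpow_add two_pos]
        ring
    _ ≤ ((n:ℝ) + m) ^ (-(1:ℝ)/2) * log (n + m) ^ (-(3:ℝ)/4) := by
        gcongr ?_ * ?_
        · exact Real.rpow_le_rpow_of_nonpos (by linarith) hnm' (by norm_num)
        · exact Real.rpow_le_rpow_of_nonpos (Real.log_pos (by linarith)) hlog (by norm_num)

section Telescoping

variable {f f' : ℝ → ℝ}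

lemma deriv_add_one_le_sub_le_deriv {a x : ℝ} (hf : ∀ y, a ≤ y → HasDerivAt f (f' y) y)
    (hf' : AntitoneOn f' (Set.Ici a)) (hx : a ≤ x) :
    f' (x + 1) ≤ f (x + 1) - f x ∧ f (x + 1) - f x ≤ f' x := by
  obtain ⟨c, ⟨hxc, hcx⟩, hc⟩ := exists_hasDerivAt_eq_slope f f' (lt_add_one x)
    (fun y hy => (hf y (hx.trans hy.1)).continuousAt.continuousWithinAt)
    (fun y hy => hf y (hx.trans hy.1.le))
  rw [add_sub_cancel_left, div_one] at hc
  have hc_mem : c ∈ Set.Ici a := hx.trans hxc.le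
  exact ⟨hc ▸ hf' hc_mem (Set.mem_Ici.2 (by linarith)) hcx.le, hc ▸ hf' hx hc_mem hxc.le⟩

variable {a : ℕ} (hf : ∀ y, (a : ℝ) ≤ y → HasDerivAt f (f' y) y)
  (hf' : AntitoneOn f' (Set.Ici (a : ℝ)))
include hf hf'

lemma sub_le_sum_Ico_deriv {b : ℕ} (hab : a ≤ b) :
    f b - f a ≤ ∑ k ∈ Ico a b, f' k := by
  induction b, hab using Nat.le_induction with
  | base => simp
  | succ b hab ih =>
    rw [sum_Ico_succ_top hab, Nat.cast_succ]
    linarith [(deriv_add_one_le_sub_le_deriv hf hf' (x := b) (by exact_mod_cast hab)).2]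

lemma sum_Ico_deriv_add_one_le_sub {b : ℕ} (hab : a ≤ b) :
    ∑ k ∈ Ico a b, f' (k + 1) ≤ f b - f a := by
  induction b, hab using Nat.le_induction with
  | base => simp
  | succ b hab ih =>
    rw [sum_Ico_succ_top hab, Nat.cast_succ]
    linarith [(deriv_add_one_le_sub_le_deriv hf hf' (x := b) (by exact_mod_cast hab)).1]

end Telescoping

lemma antitoneOn_inv_mul_log_rpow {p : ℝ} (hp : p ≤ 0) :
    AntitoneOn (fun x : ℝ => x⁻¹ * log x ^ p) (Set.Ioi 1) := by
  intro x (hx : 1 < x) y (hy : 1 < y) hxy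
  have hlog : 0 < log x := Real.log_pos hx
  exact mul_le_mul (inv_anti₀ (by linarith) hxy)
    (Real.rpow_le_rpow_of_nonpos hlog (Real.log_le_log (by linarith) hxy) hp)
    (Real.rpow_nonneg (Real.log_pos hy).le _) (by positivity)

lemma hasDerivAt_neg_two_mul_log_rpow_neg_half {x : ℝ} (hx : 1 < x) :
    HasDerivAt (fun y => -2 * log y ^ (-(1:ℝ)/2)) (x⁻¹ * log x ^ (-(3:ℝ)/2)) x := by
  have hlog : log x ≠ 0 := (Real.log_pos hx).ne'
  have h := ((Real.hasDerivAt_rpow_const (p := -(1:ℝ)/2) (Or.inl hlog)).comp x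
    (Real.hasDerivAt_log (by positivity))).const_mul (-2)
  exact h.congr_deriv (by rw [show -(1:ℝ)/2 - 1 = -(3:ℝ)/2 by norm_num]; ring)

lemma hasDerivAt_log_log {x : ℝ} (hx : 1 < x) :
    HasDerivAt (fun y => log (log y)) (x⁻¹ * log x ^ (-1:ℝ)) x := by
  rw [Real.rpow_neg_one, mul_comm]
  exact (Real.hasDerivAt_log (Real.log_pos hx).ne').comp x (Real.hasDerivAt_log (by positivity))

lemma summable_logCoeff_sq : Summable (fun n : ℤ => logCoeff n ^ 2) := by
  refine Summable.of_nat_of_neg ?_ (by simp [logCoeff])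
  rw [← summable_nat_add_iff 3]
  refine summable_of_sum_range_le (c := 2 * log 2 ^ (-(1:ℝ)/2)) (fun _ => sq_nonneg _)
    fun n => ?_
  have htel := sum_Ico_deriv_add_one_le_sub (a := 2) (b := n + 2)
    (fun y hy => hasDerivAt_neg_two_mul_log_rpow_neg_half (by push_cast at hy; linarith))
    ((antitoneOn_inv_mul_log_rpow (by norm_num)).mono fun y (hy : (2:ℕ) ≤ y) => by
      show 1 < y; push_cast at hy; linarith) (by omega)
  rw [sum_Ico_eq_sum_range, Nat.add_sub_cancel] at htel
  have hpos : 0 ≤ log ((n + 2 : ℕ) : ℝ) ^ (-(1:ℝ)/2) :=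
    Real.rpow_nonneg (Real.log_nonneg (by norm_cast; omega)) _
  calc ∑ i ∈ range n, logCoeff ((i + 3 : ℕ) : ℤ) ^ 2
      = ∑ i ∈ range n,
          (((2 + i : ℕ) : ℝ) + 1)⁻¹ * log (((2 + i : ℕ) : ℝ) + 1) ^ (-(3:ℝ)/2) := by
        refine sum_congr rfl fun i _ => ?_
        rw [logCoeff_sq (by omega)]
        push_cast; ring_nf
    _ ≤ 2 * log 2 ^ (-(1:ℝ)/2) := by
        refine htel.trans ?_
        push_cast at hpos ⊢
        linarith

lemma log_rpow_neg_half_le_sum_Ico {n : ℕ} (hn : 2 ≤ n) :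
    log n ^ (-(1:ℝ)/2) ≤ ∑ m ∈ Ico n (n ^ 4), (m : ℝ)⁻¹ * log m ^ (-(3:ℝ)/2) := by
  have hn' : (2:ℝ) ≤ n := by exact_mod_cast hn
  have htel := sub_le_sum_Ico_deriv (a := n) (b := n ^ 4)
    (fun y hy => hasDerivAt_neg_two_mul_log_rpow_neg_half (by linarith))
    ((antitoneOn_inv_mul_log_rpow (by norm_num)).mono fun y (hy : (n:ℝ) ≤ y) => by
      show 1 < y; linarith) (Nat.le_self_pow (by norm_num) n)
  have hlog : 0 ≤ log n := Real.log_nonneg (by linarith)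
  have hpow : log ((n ^ 4 : ℕ) : ℝ) ^ (-(1:ℝ)/2) = log n ^ (-(1:ℝ)/2) / 2 := by
    rw [Nat.cast_pow, Real.log_pow, Nat.cast_ofNat, Real.mul_rpow (by norm_num) hlog,
      show (4:ℝ) = 2 ^ (2:ℝ) by norm_num, ← Real.rpow_mul (by norm_num)]
    norm_num [Real.rpow_neg_one]
    ring
  rw [hpow] at htel
  linarith

lemma log_log_sub_le_sum_Ico {K : ℕ} (hK : 2 ≤ K) :
    log (log K) - log (log 2)
      ≤ ∑ n ∈ Ico 2 K, (n : ℝ)⁻¹ * log n ^ (-1:ℝ) := by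
  have htel := sub_le_sum_Ico_deriv (a := 2) (b := K)
    (fun y hy => hasDerivAt_log_log (by push_cast at hy; linarith))
    ((antitoneOn_inv_mul_log_rpow (by norm_num)).mono fun y (hy : ((2:ℕ):ℝ) ≤ y) => by
      show 1 < y; push_cast at hy; linarith) hK
  simpa using htel

lemma rpow_sub_rpow_le {α a b : ℝ} (hα : 1 ≤ α) (hb : 0 ≤ b) (hba : b ≤ a) :
    a ^ α - b ^ α ≤ α * a ^ (α - 1) * (a - b) := by
  obtain rfl | ha := (hb.trans hba).eq_or_lt
  · obtain rfl : b = 0 := le_antisymm hba hb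
    simp [Real.zero_rpow (by linarith : α ≠ 0)]
  -- Bernoulli's inequality for `(b / a)^α` is the tangent line bound of `x ↦ x^α` at `a`.
  have hbern := one_add_mul_self_le_rpow_one_add (s := b / a - 1)
    (by linarith [div_nonneg hb ha.le]) hα
  rw [add_sub_cancel, Real.div_rpow hb ha.le, le_div_iff₀ (Real.rpow_pos_of_pos ha α)] at hbern
  have ha1 : a ^ α = a ^ (α - 1) * a := by
    rw [← Real.rpow_add_one ha.ne', sub_add_cancel]
  rw [ha1] at hbern ⊢
  have : a ^ (α - 1) * a * (α * (b / a - 1)) = α * a ^ (α - 1) * (b - a) := by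
    field_simp
  nlinarith

lemma jb_add_rpow_sub_rpow_le {α x y : ℝ} (hα : 1 ≤ α) (hx : 1 ≤ x) (hxy : x ≤ y) :
    jb ((x + y) ^ α - y ^ α) ≤ (1 + α * 2 ^ (α - 1)) * (x * y ^ (α - 1)) := by
  have hy : 0 ≤ y := by linarith
  have hy1 : 1 ≤ x * y ^ (α - 1) :=
    one_le_mul_of_one_le_of_one_le hx (Real.one_le_rpow (by linarith) (by linarith))
  have hgap_nonneg : 0 ≤ (x + y) ^ α - y ^ α :=
    sub_nonneg.2 (Real.rpow_le_rpow hy (by linarith) (by linarith))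
  have hgap : (x + y) ^ α - y ^ α ≤ α * 2 ^ (α - 1) * (x * y ^ (α - 1)) :=
    calc (x + y) ^ α - y ^ α ≤ α * (x + y) ^ (α - 1) * (x + y - y) :=
          rpow_sub_rpow_le hα hy (by linarith)
      _ ≤ α * (2 * y) ^ (α - 1) * x := by
          rw [add_sub_cancel_right]
          gcongr
          linarith
      _ = α * 2 ^ (α - 1) * (x * y ^ (α - 1)) := by
          rw [Real.mul_rpow zero_le_two hy]; ring
  calc jb ((x + y) ^ α - y ^ α) ≤ 1 + ((x + y) ^ α - y ^ α) := by
        simpa [abs_of_nonneg hgap_nonneg] using jb_le_one_add_abs ((x + y) ^ α - y ^ α)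
    _ ≤ (1 + α * 2 ^ (α - 1)) * (x * y ^ (α - 1)) := by nlinarith

lemma jb_rpow_nonneg (x p : ℝ) : 0 ≤ jb x ^ p := Real.rpow_nonneg (jb_pos x).le p

def pairTerm (α σ s₁ : ℝ) (n m : ℤ) : ℝ :=
  jb ((n + m : ℤ) : ℝ) ^ σ * jb ((m : ℤ) : ℝ) ^ σ
    * jb (|((n + m : ℤ) : ℝ)| ^ α - |((m : ℤ) : ℝ)| ^ α) ^ (-s₁)
    * logCoeff (n + m) * logCoeff m

lemma pairTerm_nonneg (α σ s₁ : ℝ) (n m : ℤ) : 0 ≤ pairTerm α σ s₁ n m := by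
  have := jb_rpow_nonneg ((n + m : ℤ) : ℝ) σ
  have := jb_rpow_nonneg (m : ℝ) σ
  have := jb_rpow_nonneg (|((n + m : ℤ) : ℝ)| ^ α - |((m : ℤ) : ℝ)| ^ α) (-s₁)
  have := logCoeff_nonneg (n + m)
  have := logCoeff_nonneg m
  unfold pairTerm
  positivity

lemma pairTerm_lower_bound {α σ s₁ : ℝ} (hα : 1 < α) (hσ : 0 ≤ σ)
    (hs₁ : s₁ = 2 * σ / (α - 1)) :
    ∃ C > 0, ∀ ⦃n m : ℤ⦄, 2 ≤ n → n ≤ m →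
      C * (n : ℝ) ^ (-s₁) * ((m : ℝ)⁻¹ * log m ^ (-(3:ℝ)/2)) ≤ pairTerm α σ s₁ n m := by
  have hs₁0 : 0 ≤ s₁ := by rw [hs₁]; exact div_nonneg (by linarith) (by linarith)
  have hσs₁ : (α - 1) * s₁ = 2 * σ := by rw [hs₁]; field_simp [(by linarith : α - 1 ≠ 0)]
  set C₂ : ℝ := 1 + α * 2 ^ (α - 1)
  have hC₂ : 0 < C₂ := by positivity
  refine ⟨C₂ ^ (-s₁) * 2 ^ (-(5:ℝ)/4), by positivity, fun n m hn hnm => ?_⟩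
  have hn_real : (2:ℝ) ≤ n := by exact_mod_cast hn
  have hnm_real : (n:ℝ) ≤ m := by exact_mod_cast hnm
  have hm_pos : (0:ℝ) < m := by linarith
  have hjb_add : (m:ℝ) ^ σ ≤ jb ((n + m : ℤ) : ℝ) ^ σ := by
    refine Real.rpow_le_rpow hm_pos.le ((le_abs_self _).trans' ?_ |>.trans (abs_le_jb _)) hσ
    push_cast; linarith
  have hjb_m : (m:ℝ) ^ σ ≤ jb (m:ℝ) ^ σ :=
    Real.rpow_le_rpow hm_pos.le ((le_abs_self _).trans (abs_le_jb _)) hσ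
  have hjb_gap : (C₂ * (n * (m:ℝ) ^ (α - 1))) ^ (-s₁)
      ≤ jb (|((n + m : ℤ) : ℝ)| ^ α - |((m : ℤ) : ℝ)| ^ α) ^ (-s₁) := by
    rw [Int.cast_add, abs_of_pos (by linarith), abs_of_pos hm_pos]
    exact Real.rpow_le_rpow_of_nonpos (jb_pos _)
      (jb_add_rpow_sub_rpow_le hα.le (by linarith) hnm_real) (neg_nonpos.2 hs₁0)
  have hcoeff := two_rpow_mul_logCoeff_le_logCoeff_add (by omega) (hn.trans hnm) hnm
  have hcancel : (m:ℝ) ^ σ * (m:ℝ) ^ σ * (C₂ * (n * (m:ℝ) ^ (α - 1))) ^ (-s₁)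
      = C₂ ^ (-s₁) * (n:ℝ) ^ (-s₁) := by
    rw [Real.mul_rpow hC₂.le (by positivity), Real.mul_rpow (by linarith) (by positivity),
      ← Real.rpow_mul hm_pos.le, ← Real.rpow_add hm_pos, mul_comm, mul_assoc, mul_assoc,
      ← Real.rpow_add hm_pos, show (α - 1) * -s₁ + (σ + σ) = 0 by linarith, Real.rpow_zero]
    ring
  calc C₂ ^ (-s₁) * 2 ^ (-(5:ℝ)/4) * (n:ℝ) ^ (-s₁) * ((m:ℝ)⁻¹ * log m ^ (-(3:ℝ)/2))
      = (m:ℝ) ^ σ * (m:ℝ) ^ σ * (C₂ * (n * (m:ℝ) ^ (α - 1))) ^ (-s₁)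
          * (2 ^ (-(5:ℝ)/4) * logCoeff m) * logCoeff m := by
        rw [hcancel, ← logCoeff_sq (hn.trans hnm)]
        ring
    _ ≤ pairTerm α σ s₁ n m := by
        have := jb_rpow_nonneg ((n + m : ℤ) : ℝ) σ
        have := jb_rpow_nonneg (m : ℝ) σ
        have := jb_rpow_nonneg (|((n + m : ℤ) : ℝ)| ^ α - |((m : ℤ) : ℝ)| ^ α) (-s₁)
        have := logCoeff_nonneg m
        unfold pairTerm
        gcongr

def innerSum (α σ s₁ : ℝ) (N : ℕ) (n : ℤ) : ℝ :=
  ∑ m ∈ (Icc (-(N : ℤ)) (N : ℤ)).filter (fun m => |n + m| ≤ (N : ℤ)), pairTerm α σ s₁ n m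

def outerSum (α σ s₁ s₂ : ℝ) (N : ℕ) : ℝ :=
  ∑ n ∈ (Icc (-(2 * (N : ℤ))) (2 * (N : ℤ))).filter (fun n => n ≠ 0),
    jb (n : ℝ) ^ (-(2 * s₂)) * innerSum α σ s₁ N n ^ 2

section LowerBounds

variable {α σ s₁ : ℝ} (hα : 1 < α) (hσ : 0 ≤ σ) (hs₁ : s₁ = 2 * σ / (α - 1))
include hα hσ hs₁

lemma innerSum_lower_bound :
    ∃ C > 0, ∀ ⦃n N : ℕ⦄, 2 ≤ n → n + n ^ 4 ≤ N →
      C * (n : ℝ) ^ (-s₁) * log n ^ (-(1:ℝ)/2) ≤ innerSum α σ s₁ N n := by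
  obtain ⟨C, hC, hpair⟩ := pairTerm_lower_bound hα hσ hs₁
  refine ⟨C, hC, fun n N hn hN => ?_⟩
  have hsub : (Ico n (n ^ 4)).map (Nat.castEmbedding : ℕ ↪ ℤ)
      ⊆ (Icc (-(N : ℤ)) (N : ℤ)).filter (fun m => |(n : ℤ) + m| ≤ (N : ℤ)) := by
    intro z hz
    simp only [Finset.mem_map, mem_Ico, Nat.castEmbedding_apply] at hz
    obtain ⟨m, ⟨hnm, hm⟩, rfl⟩ := hz
    simp only [mem_filter, mem_Icc]
    rw [abs_of_nonneg (by positivity)]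
    omega
  calc C * (n : ℝ) ^ (-s₁) * log n ^ (-(1:ℝ)/2)
      ≤ C * (n : ℝ) ^ (-s₁) * ∑ m ∈ Ico n (n ^ 4), (m : ℝ)⁻¹ * log m ^ (-(3:ℝ)/2) := by
        gcongr
        exact log_rpow_neg_half_le_sum_Ico hn
    _ = ∑ m ∈ Ico n (n ^ 4),
          C * ((n : ℤ) : ℝ) ^ (-s₁) * (((m : ℤ) : ℝ)⁻¹ * log ((m : ℤ) : ℝ) ^ (-(3:ℝ)/2)) := by
        simp only [mul_sum, Int.cast_natCast]
    _ ≤ ∑ m ∈ Ico n (n ^ 4), pairTerm α σ s₁ n m :=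
        sum_le_sum fun m hm => hpair (by omega) (by exact_mod_cast (mem_Ico.1 hm).1)
    _ = ∑ m ∈ (Ico n (n ^ 4)).map (Nat.castEmbedding : ℕ ↪ ℤ), pairTerm α σ s₁ n m := by
        rw [sum_map]; rfl
    _ ≤ innerSum α σ s₁ N n :=
        sum_le_sum_of_subset_of_nonneg hsub fun _ _ _ => pairTerm_nonneg _ _ _ _ _

variable {s₂ : ℝ} (hs₂ : 2 * (s₁ + s₂) ≤ 1)
include hs₂

lemma outerTerm_lower_bound :
    ∃ c > 0, ∀ ⦃n N : ℕ⦄, 2 ≤ n → n + n ^ 4 ≤ N →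
      c * ((n : ℝ)⁻¹ * log n ^ (-1:ℝ))
        ≤ jb (n : ℝ) ^ (-(2 * s₂)) * innerSum α σ s₁ N n ^ 2 := by
  obtain ⟨C, hC, hinner⟩ := innerSum_lower_bound hα hσ hs₁
  refine ⟨min 1 (2 ^ (-(2 * s₂))) * C ^ 2, by positivity, fun n N hn hN => ?_⟩
  have hx : (2:ℝ) ≤ n := by exact_mod_cast hn
  have hlog : 0 < log n := Real.log_pos (by linarith)
  have hsq : (C * (n : ℝ) ^ (-s₁) * log n ^ (-(1:ℝ)/2)) ^ 2
      = C ^ 2 * (n : ℝ) ^ (-(2 * s₁)) * log n ^ (-1:ℝ) := by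
    have hn_sq : ((n : ℝ) ^ (-s₁)) ^ 2 = (n : ℝ) ^ (-(2 * s₁)) := by
      rw [← Real.rpow_natCast, ← Real.rpow_mul (by linarith)]; ring_nf
    have hlog_sq : (log n ^ (-(1:ℝ)/2)) ^ 2 = log n ^ (-1:ℝ) := by
      rw [← Real.rpow_natCast, ← Real.rpow_mul hlog.le]; norm_num
    rw [mul_pow, mul_pow, hn_sq, hlog_sq]
  have hpow : (n : ℝ)⁻¹ ≤ (n : ℝ) ^ (-(2 * s₂)) * (n : ℝ) ^ (-(2 * s₁)) := by
    rw [← Real.rpow_add (by linarith), ← Real.rpow_neg_one]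
    exact Real.rpow_le_rpow_of_exponent_le (by linarith) (by linarith)
  calc min 1 (2 ^ (-(2 * s₂))) * C ^ 2 * ((n : ℝ)⁻¹ * log n ^ (-1:ℝ))
      ≤ min 1 (2 ^ (-(2 * s₂))) * C ^ 2
          * ((n : ℝ) ^ (-(2 * s₂)) * (n : ℝ) ^ (-(2 * s₁)) * log n ^ (-1:ℝ)) := by
        gcongr
    _ = min 1 (2 ^ (-(2 * s₂))) * (n : ℝ) ^ (-(2 * s₂))
          * (C * (n : ℝ) ^ (-s₁) * log n ^ (-(1:ℝ)/2)) ^ 2 := by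
        rw [hsq]; ring
    _ ≤ jb (n : ℝ) ^ (-(2 * s₂)) * innerSum α σ s₁ N n ^ 2 :=
        mul_le_mul (min_one_two_rpow_mul_le_jb_rpow _ (by linarith))
          (pow_le_pow_left₀ (by positivity) (hinner hn hN) 2) (sq_nonneg _) (jb_rpow_nonneg _ _)

lemma outerSum_lower_bound :
    ∃ c > 0, ∀ ⦃K N : ℕ⦄, 2 ≤ K → K + K ^ 4 ≤ N →
      c * (log (log K) - log (log 2)) ≤ outerSum α σ s₁ s₂ N := by
  obtain ⟨c, hc, hterm⟩ := outerTerm_lower_bound hα hσ hs₁ hs₂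
  refine ⟨c, hc, fun K N hK hN => ?_⟩
  have hsub : (Ico 2 K).map (Nat.castEmbedding : ℕ ↪ ℤ)
      ⊆ (Icc (-(2 * (N : ℤ))) (2 * (N : ℤ))).filter (fun n => n ≠ 0) := by
    intro z hz
    simp only [Finset.mem_map, mem_Ico, Nat.castEmbedding_apply] at hz
    obtain ⟨n, ⟨hn, hnK⟩, rfl⟩ := hz
    simp only [mem_filter, mem_Icc]
    omega
  calc c * (log (log K) - log (log 2))
      ≤ c * ∑ n ∈ Ico 2 K, (n : ℝ)⁻¹ * log n ^ (-1:ℝ) := by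
        gcongr
        exact log_log_sub_le_sum_Ico hK
    _ = ∑ n ∈ Ico 2 K, c * ((n : ℝ)⁻¹ * log n ^ (-1:ℝ)) := mul_sum _ _ _
    _ ≤ ∑ n ∈ Ico 2 K, jb (n : ℝ) ^ (-(2 * s₂)) * innerSum α σ s₁ N n ^ 2 := by
        refine sum_le_sum fun n hn => hterm (mem_Ico.1 hn).1 ?_
        have hnK := (mem_Ico.1 hn).2
        have := Nat.pow_le_pow_left hnK.le 4
        omega
    _ = ∑ n ∈ (Ico 2 K).map (Nat.castEmbedding : ℕ ↪ ℤ),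
          jb (n : ℝ) ^ (-(2 * s₂)) * innerSum α σ s₁ N n ^ 2 := by
        simp only [sum_map, Nat.castEmbedding_apply, Int.cast_natCast]
    _ ≤ outerSum α σ s₁ s₂ N :=
        sum_le_sum_of_subset_of_nonneg hsub fun _ _ _ =>
          mul_nonneg (jb_rpow_nonneg _ _) (sq_nonneg _)

lemma tendsto_outerSum : Tendsto (outerSum α σ s₁ s₂) atTop atTop := by
  obtain ⟨c, hc, hbound⟩ := outerSum_lower_bound hα hσ hs₁ hs₂
  have hloglog : Tendsto (fun K : ℕ => c * (log (log K) - log (log 2)))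
      atTop atTop := by
    refine Tendsto.const_mul_atTop hc ?_
    simpa only [sub_eq_add_neg, Function.comp_apply] using tendsto_atTop_add_const_right _ _
      (tendsto_log_atTop.comp (tendsto_log_atTop.comp tendsto_natCast_atTop_atTop))
  refine tendsto_atTop_atTop.2 fun b => ?_
  obtain ⟨K, hKb, hK⟩ := ((tendsto_atTop.1 hloglog b).and (eventually_ge_atTop 2)).exists
  exact ⟨K + K ^ 4, fun N hN => hKb.trans (hbound hK hN)⟩

end LowerBounds

/-- Optimality at the endpoint `s₁ = 2σ/(α−1)`, `2(s₁+s₂) ≤ 1`: the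
coefficients `logCoeff` are square-summable, yet
`S_N = ‖⟨D_t⟩^{−s₁} f_N(0,·)‖²_{H^{−s₂}}` diverges. -/
theorem optimality_endpoint
    (α σ s₁ s₂ : ℝ) (hα : 1 < α) (hσ : 0 < σ)
    (hs₁ : s₁ = 2 * σ / (α - 1)) (hs₂ : 2 * (s₁ + s₂) ≤ 1) :
    Summable (fun n : ℤ => logCoeff n ^ 2) ∧
    Tendsto
      (fun N : ℕ =>
        ∑ n ∈ (Finset.Icc (-(2 * (N : ℤ))) (2 * (N : ℤ))).filter
            (fun n => n ≠ 0),
          jb (n : ℝ) ^ (-(2 * s₂)) *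
            (∑ m ∈ (Finset.Icc (-(N : ℤ)) (N : ℤ)).filter
                (fun m => |n + m| ≤ (N : ℤ)),
              jb ((n + m : ℤ) : ℝ) ^ σ * jb ((m : ℤ) : ℝ) ^ σ
                * jb (|((n + m : ℤ) : ℝ)| ^ α - |((m : ℤ) : ℝ)| ^ α) ^ (-s₁)
                * logCoeff (n + m) * logCoeff m) ^ 2)
      atTop atTop := by
  exact ⟨summable_logCoeff_sq, tendsto_outerSum hα hσ.le hs₁ hs₂⟩
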